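/- arXiv:2107.04923 — 3 statements merged into one kernel-verified Lean document; each statement's English description precedes it below -/
import Mathlib

section
/- For fixed scalars Y > 0, z, and σ² > 0, ∫ exp(−z − v)|Y − exp(z + v)| φ(v; 0, σ²) dv = 1 − 2Φ(log(Y e^{−z}); 0, σ²) + Y exp(−z + σ²/2)[2Φ(log(Y e^{−z}) + σ²; 0, σ²) − 1]. -/
open MeasureTheory Real

/-- The `N(0, σ²)` density. -/
noncomputable def gpdf (s2 x : ℝ) : ℝ :=
  (Real.sqrt (2 * Real.pi * s2))⁻¹ * Real.exp (-(x ^ 2) / (2 * s2))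

/-- The `N(0, σ²)` cumulative distribution function. -/
noncomputable def gcdf (s2 x : ℝ) : ℝ := ∫ t in Set.Iic x, gpdf s2 t

/-!
With `a = Y e^{-z}` the integrand is `|(a e^{-v} - 1) φ(v)|`, and `a e^{-v} - 1` changes sign
exactly at `v = log a`. For such an `f`, `∫ |f| = 2 ∫_{v ≤ log a} f - ∫ f`. Completing the square,
`e^{tv} φ(v) = e^{t²σ²/2} φ(v - tσ²)`, so both integrals of `f` are shifted Gaussian CDFs.
-/

theorem integral_abs_eq_two_mul_setIntegral_sub {X : Type*} [MeasurableSpace X] {μ : Measure X}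
    {f : X → ℝ} {s : Set X} (hs : MeasurableSet s) (hf : Integrable f μ)
    (hpos : ∀ x ∈ s, 0 ≤ f x) (hneg : ∀ x ∉ s, f x ≤ 0) :
    ∫ x, |f x| ∂μ = 2 * ∫ x in s, f x ∂μ - ∫ x, f x ∂μ := by
  have habs_s : ∫ x in s, |f x| ∂μ = ∫ x in s, f x ∂μ :=
    setIntegral_congr_fun hs fun x hx => abs_of_nonneg (hpos x hx)
  have habs_sc : ∫ x in sᶜ, |f x| ∂μ = -∫ x in sᶜ, f x ∂μ := by
    rw [← integral_neg]
    exact setIntegral_congr_fun hs.compl fun x hx => abs_of_nonpos (hneg x hx)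
  rw [← integral_add_compl hs hf.abs, ← integral_add_compl hs hf, habs_s, habs_sc]
  ring

variable {s2 : ℝ}

theorem gpdf_eq_gaussianPDFReal (hs2 : 0 < s2) :
    gpdf s2 = ProbabilityTheory.gaussianPDFReal 0 ⟨s2, hs2.le⟩ := by
  funext x
  simp only [gpdf, ProbabilityTheory.gaussianPDFReal, sub_zero]
  rfl

theorem gpdf_nonneg (s2 x : ℝ) : 0 ≤ gpdf s2 x := by
  unfold gpdf; positivity

theorem integrable_gpdf (hs2 : 0 < s2) : Integrable (gpdf s2) := by
  rw [gpdf_eq_gaussianPDFReal hs2]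
  exact ProbabilityTheory.integrable_gaussianPDFReal 0 _

theorem integral_gpdf (hs2 : 0 < s2) : ∫ x, gpdf s2 x = 1 := by
  rw [gpdf_eq_gaussianPDFReal hs2]
  exact ProbabilityTheory.integral_gaussianPDFReal_eq_one 0 fun h => hs2.ne' (congrArg Subtype.val h)

theorem setIntegral_Iic_gpdf_sub (s2 a c : ℝ) :
    ∫ v in Set.Iic c, gpdf s2 (v - a) = gcdf s2 (c - a) := by
  have h := (measurePreserving_sub_right volume a).setIntegral_preimage_emb
    (MeasurableEquiv.subRight a).measurableEmbedding (gpdf s2) (Set.Iic (c - a))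
  simpa [gcdf] using h

theorem exp_mul_mul_gpdf (hs2 : 0 < s2) (t v : ℝ) :
    exp (t * v) * gpdf s2 v = exp (t ^ 2 * s2 / 2) * gpdf s2 (v - t * s2) := by
  unfold gpdf
  rw [mul_left_comm, mul_left_comm (exp _), ← exp_add, ← exp_add]
  congr 2
  field_simp
  ring

theorem integrable_exp_mul_mul_gpdf (hs2 : 0 < s2) (t : ℝ) :
    Integrable fun v => exp (t * v) * gpdf s2 v := by
  simp_rw [exp_mul_mul_gpdf hs2 t]
  exact ((integrable_gpdf hs2).comp_sub_right _).const_mul _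

theorem integral_exp_mul_mul_gpdf (hs2 : 0 < s2) (t : ℝ) :
    ∫ v, exp (t * v) * gpdf s2 v = exp (t ^ 2 * s2 / 2) := by
  simp_rw [exp_mul_mul_gpdf hs2 t]
  rw [integral_const_mul, integral_sub_right_eq_self (gpdf s2), integral_gpdf hs2, mul_one]

theorem setIntegral_Iic_exp_mul_mul_gpdf (hs2 : 0 < s2) (t c : ℝ) :
    ∫ v in Set.Iic c, exp (t * v) * gpdf s2 v = exp (t ^ 2 * s2 / 2) * gcdf s2 (c - t * s2) := by
  simp_rw [exp_mul_mul_gpdf hs2 t]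
  rw [integral_const_mul, setIntegral_Iic_gpdf_sub]

theorem integrable_exp_neg_mul_gpdf (hs2 : 0 < s2) :
    Integrable fun v => exp (-v) * gpdf s2 v := by
  simpa only [neg_one_mul] using integrable_exp_mul_mul_gpdf hs2 (-1)

theorem integral_exp_neg_mul_gpdf (hs2 : 0 < s2) :
    ∫ v, exp (-v) * gpdf s2 v = exp (s2 / 2) := by
  simpa only [neg_one_mul, neg_one_sq, one_mul] using integral_exp_mul_mul_gpdf hs2 (-1)

theorem setIntegral_Iic_exp_neg_mul_gpdf (hs2 : 0 < s2) (c : ℝ) :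
    ∫ v in Set.Iic c, exp (-v) * gpdf s2 v = exp (s2 / 2) * gcdf s2 (c + s2) := by
  simpa only [neg_one_mul, neg_one_sq, one_mul, sub_neg_eq_add] using
    setIntegral_Iic_exp_mul_mul_gpdf hs2 (-1) c

section AffineInExpNeg

variable (a : ℝ)

theorem integrable_mul_exp_neg_sub_one_mul_gpdf (hs2 : 0 < s2) :
    Integrable fun v => (a * exp (-v) - 1) * gpdf s2 v := by
  simp_rw [sub_one_mul, mul_assoc]
  exact ((integrable_exp_neg_mul_gpdf hs2).const_mul a).sub (integrable_gpdf hs2)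

theorem integral_mul_exp_neg_sub_one_mul_gpdf (hs2 : 0 < s2) :
    ∫ v, (a * exp (-v) - 1) * gpdf s2 v = a * exp (s2 / 2) - 1 := by
  simp_rw [sub_one_mul, mul_assoc]
  rw [integral_sub ((integrable_exp_neg_mul_gpdf hs2).const_mul a) (integrable_gpdf hs2),
    integral_const_mul, integral_exp_neg_mul_gpdf hs2, integral_gpdf hs2]

theorem setIntegral_Iic_mul_exp_neg_sub_one_mul_gpdf (hs2 : 0 < s2) (c : ℝ) :
    ∫ v in Set.Iic c, (a * exp (-v) - 1) * gpdf s2 v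
      = a * exp (s2 / 2) * gcdf s2 (c + s2) - gcdf s2 c := by
  simp_rw [sub_one_mul, mul_assoc]
  rw [integral_sub ((integrable_exp_neg_mul_gpdf hs2).const_mul a).integrableOn
    (integrable_gpdf hs2).integrableOn, integral_const_mul, setIntegral_Iic_exp_neg_mul_gpdf hs2,
    ← mul_assoc]
  rfl

variable {a}

theorem integral_abs_mul_exp_neg_sub_one_mul_gpdf (hs2 : 0 < s2) (ha : 0 < a) :
    ∫ v, |(a * exp (-v) - 1) * gpdf s2 v|
      = 1 - 2 * gcdf s2 (log a) + a * exp (s2 / 2) * (2 * gcdf s2 (log a + s2) - 1) := by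
  have h_exp : ∀ v, a * exp (-v) = exp (log a - v) := fun v => by
    rw [sub_eq_add_neg, exp_add, exp_log ha]
  have h_nonneg : ∀ v ∈ Set.Iic (log a), 0 ≤ (a * exp (-v) - 1) * gpdf s2 v := fun v hv => by
    rw [h_exp]
    exact mul_nonneg (sub_nonneg.2 (one_le_exp (sub_nonneg.2 hv))) (gpdf_nonneg s2 v)
  have h_nonpos : ∀ v ∉ Set.Iic (log a), (a * exp (-v) - 1) * gpdf s2 v ≤ 0 := fun v hv => by
    rw [h_exp]
    refine mul_nonpos_of_nonpos_of_nonneg (sub_nonpos.2 (exp_le_one_iff.2 ?_)) (gpdf_nonneg s2 v)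
    linarith [Set.notMem_Iic.1 hv]
  rw [integral_abs_eq_two_mul_setIntegral_sub measurableSet_Iic
    (integrable_mul_exp_neg_sub_one_mul_gpdf a hs2) h_nonneg h_nonpos,
    setIntegral_Iic_mul_exp_neg_sub_one_mul_gpdf a hs2, integral_mul_exp_neg_sub_one_mul_gpdf a hs2]
  ring

end AffineInExpNeg

theorem exp_neg_sub_mul_abs_sub_exp_add (Y z v : ℝ) :
    exp (-z - v) * |Y - exp (z + v)| = |Y * exp (-z) * exp (-v) - 1| := by
  have h_one : exp (-z - v) * exp (z + v) = 1 := by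
    rw [← exp_add, show -z - v + (z + v) = 0 by ring, exp_zero]
  rw [← abs_of_pos (exp_pos (-z - v)), ← abs_mul, mul_sub, h_one, sub_eq_add_neg (-z), exp_add]
  ring_nf

/-- For fixed `Y > 0`, `z` and `σ² > 0`,
`∫ exp(−z − v)|Y − exp(z + v)| φ(v; 0, σ²) dv
  = 1 − 2Φ(log(Y e^{−z}); 0, σ²) + Y exp(−z + σ²/2)[2Φ(log(Y e^{−z}) + σ²; 0, σ²) − 1]`. -/
theorem lare_second_term (Y z s2 : ℝ) (hY : 0 < Y) (hs2 : 0 < s2) :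
    ∫ v : ℝ, Real.exp (-z - v) * |Y - Real.exp (z + v)| * gpdf s2 v
      = 1 - 2 * gcdf s2 (Real.log (Y * Real.exp (-z)))
        + Y * Real.exp (-z + s2 / 2)
          * (2 * gcdf s2 (Real.log (Y * Real.exp (-z)) + s2) - 1) := by
  have h_integrand : ∀ v, exp (-z - v) * |Y - exp (z + v)| * gpdf s2 v
      = |(Y * exp (-z) * exp (-v) - 1) * gpdf s2 v| := fun v => by
    rw [exp_neg_sub_mul_abs_sub_exp_add, abs_mul, abs_of_nonneg (gpdf_nonneg s2 v)]
  simp_rw [h_integrand]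
  rw [integral_abs_mul_exp_neg_sub_one_mul_gpdf hs2 (by positivity), exp_add, mul_assoc Y]
end

section
/- In the exponential regression measurement error model: if Y = exp(Xᵀθ₀) + ε with ε independent of X, E ε = 0, and Z = X + U with U ~ N(0, Σ_u) independent of (X, ε), then E[Y Z exp(Zᵀθ)] = exp(θᵀΣ_uθ/2) · E[(X + Σ_uθ) exp((θ+θ₀)ᵀX)] and E[Y exp(Zᵀθ)] = exp(θᵀΣ_uθ/2) · E[exp((θ+θ₀)ᵀX)], assuming all expectations are finite. -/
/-!
Write `Y exp(Zᵀθ) = g(X, ε) exp(Uᵀθ)` with `g(X, ε) = Y exp(Xᵀθ)`. As `U` is independent of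
`(X, ε)`, the Gaussian factor integrates out: `E exp(Uᵀθ) = exp(θᵀΣθ/2)` is the Gaussian mgf, and
the Stein-type moment `E[Uⱼ exp(Uᵀθ)] = (Σθ)ⱼ exp(θᵀΣθ/2)` is the derivative at `s = 0` of
`s ↦ E exp(Uᵀ(θ + s eⱼ)) = exp((θ + s eⱼ)ᵀΣ(θ + s eⱼ)/2)`. The regression noise then drops out,
since `E[ε h(X)] = E[ε] E[h(X)] = 0`. The intermediate integrability facts come from those of the
products, because `exp(Uᵀθ)` is positive and independent of the other factor.
-/

open MeasureTheory ProbabilityTheory Matrix Real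

section ExpTilt

variable {Ω : Type*} {mΩ : MeasurableSpace Ω} {μ : Measure Ω} {A B : Ω → ℝ}

lemma integral_withDensity_exp (hA : AEMeasurable A μ) (g : Ω → ℝ) :
    ∫ ω, g ω ∂μ.withDensity (fun ω => ENNReal.ofReal (exp (A ω))) = ∫ ω, exp (A ω) * g ω ∂μ := by
  rw [integral_withDensity_eq_integral_toReal_smul₀ (by fun_prop) (by simp)]
  simp [ENNReal.toReal_ofReal (exp_pos _).le]

lemma integrable_withDensity_exp_iff (hA : AEMeasurable A μ) {g : Ω → ℝ} :
    Integrable g (μ.withDensity (fun ω => ENNReal.ofReal (exp (A ω))))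
      ↔ Integrable (fun ω => exp (A ω) * g ω) μ := by
  change Integrable g (μ.withDensity (fun ω => ((exp (A ω)).toNNReal : ENNReal))) ↔ _
  rw [integrable_withDensity_iff_integrable_smul₀ (by fun_prop)]
  simp [NNReal.smul_def, Real.coe_toNNReal _ (exp_pos _).le]

lemma integrableExpSet_withDensity_exp (hA : AEMeasurable A μ) :
    integrableExpSet B (μ.withDensity (fun ω => ENNReal.ofReal (exp (A ω))))
      = {s : ℝ | Integrable (fun ω => exp (A ω + s * B ω)) μ} := by
  ext s
  simp [integrableExpSet, integrable_withDensity_exp_iff hA, exp_add]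

lemma mgf_withDensity_exp (hA : AEMeasurable A μ) :
    mgf B (μ.withDensity (fun ω => ENNReal.ofReal (exp (A ω))))
      = fun s => ∫ ω, exp (A ω + s * B ω) ∂μ := by
  ext s
  simp [mgf, integral_withDensity_exp hA, exp_add]

/-- Differentiation under the integral sign, obtained as `hasDerivAt_mgf` for `B` under the measure
with density `exp ∘ A`. -/
lemma hasDerivAt_integral_exp_add_mul (hA : AEMeasurable A μ)
    (h : 0 ∈ interior {s : ℝ | Integrable (fun ω => exp (A ω + s * B ω)) μ}) :
    HasDerivAt (fun s => ∫ ω, exp (A ω + s * B ω) ∂μ) (∫ ω, B ω * exp (A ω) ∂μ) 0 := by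
  rw [← integrableExpSet_withDensity_exp hA] at h
  simpa [mgf_withDensity_exp hA, integral_withDensity_exp hA, mul_comm] using hasDerivAt_mgf h

lemma integrable_mul_exp_of_zero_mem_interior (hA : AEMeasurable A μ)
    (h : 0 ∈ interior {s : ℝ | Integrable (fun ω => exp (A ω + s * B ω)) μ}) :
    Integrable (fun ω => B ω * exp (A ω)) μ := by
  rw [← integrableExpSet_withDensity_exp hA] at h
  simpa [integrable_withDensity_exp_iff hA, mul_comm] using
    integrable_pow_mul_exp_of_mem_interior_integrableExpSet h 1

end ExpTilt

lemma Matrix.IsSymm.dotProduct_mulVec_add_smul {n : Type*} [Fintype n] {S : Matrix n n ℝ}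
    (hS : S.IsSymm) (θ v : n → ℝ) (s : ℝ) :
    (θ + s • v) ⬝ᵥ S *ᵥ (θ + s • v)
      = θ ⬝ᵥ S *ᵥ θ + 2 * s * (v ⬝ᵥ S *ᵥ θ) + s ^ 2 * (v ⬝ᵥ S *ᵥ v) := by
  have hcomm : θ ⬝ᵥ S *ᵥ v = v ⬝ᵥ S *ᵥ θ := by
    rw [dotProduct_mulVec, ← mulVec_transpose, hS.eq, dotProduct_comm]
  simp only [mulVec_add, mulVec_smul, add_dotProduct, dotProduct_add, smul_dotProduct,
    dotProduct_smul, smul_eq_mul, hcomm]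
  ring

lemma mul_add_apply_mul_exp_dotProduct {n : Type*} [Fintype n] [DecidableEq n]
    (a u θ : n → ℝ) (c : ℝ) (j : n) :
    c * (a + u) j * exp ((a + u) ⬝ᵥ θ)
      = c * a j * exp (a ⬝ᵥ θ) * exp (u ⬝ᵥ θ)
        + c * exp (a ⬝ᵥ θ) * (u ⬝ᵥ Pi.single j 1 * exp (u ⬝ᵥ θ)) := by
  rw [dotProduct_single_one, Pi.add_apply, add_dotProduct, exp_add]
  ring

lemma ProbabilityTheory.IndepFun.integrable_left_of_integrable_mul_exp
    {Ω : Type*} [MeasurableSpace Ω] {μ : Measure Ω} [NeZero μ] {A B : Ω → ℝ}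
    (hAB : IndepFun A B μ) (hA : AEStronglyMeasurable A μ) (hB : AEMeasurable B μ)
    (h : Integrable (fun ω => A ω * exp (B ω)) μ) : Integrable A μ := by
  refine (hAB.comp measurable_id measurable_exp).integrable_left_of_integrable_op (· * ·) 1
    one_ne_zero (fun x y => by simp [enorm_mul]) h hA (by fun_prop) fun hzero => ?_
  obtain ⟨ω, hω⟩ := hzero.exists
  exact (exp_pos (B ω)).ne' hω

lemma ProbabilityTheory.IndepFun.integral_add_mul_comp_of_integral_eq_zero
    {Ω α : Type*} [MeasurableSpace Ω] [MeasurableSpace α] {μ : Measure Ω} {ε : Ω → ℝ}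
    {X : Ω → α} (hεX : IndepFun ε X μ) (hε : AEStronglyMeasurable ε μ) (hX : Measurable X)
    (hε0 : ∫ ω, ε ω ∂μ = 0) {f h : α → ℝ} (hh : Measurable h)
    (hfh : Integrable (fun ω => f (X ω) * h (X ω)) μ)
    (hint : Integrable (fun ω => (f (X ω) + ε ω) * h (X ω)) μ) :
    ∫ ω, (f (X ω) + ε ω) * h (X ω) ∂μ = ∫ ω, f (X ω) * h (X ω) ∂μ := by
  have hεh : Integrable (fun ω => ε ω * h (X ω)) μ :=
    (hint.sub hfh).congr (ae_of_all _ fun ω => by simp only [Pi.sub_apply]; ring)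
  have hzero : ∫ ω, ε ω * h (X ω) ∂μ = 0 := by
    simpa [hε0] using (hεX.comp measurable_id hh).integral_fun_mul_eq_mul_integral hε
      (hh.comp hX).aestronglyMeasurable
  simp only [add_mul]
  rw [integral_add hfh hεh, hzero, add_zero]

/-- `U ~ N(0, S)`, in Cramér–Wold form: every projection `Uᵀa` is `N(0, aᵀSa)`. -/
def IsCenteredGaussian {n Ω : Type*} [Fintype n] [MeasurableSpace Ω] (P : Measure Ω)
    (U : Ω → n → ℝ) (S : Matrix n n ℝ) : Prop :=
  ∀ a : n → ℝ, P.map (fun ω => U ω ⬝ᵥ a) = gaussianReal 0 (a ⬝ᵥ S *ᵥ a).toNNReal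

namespace IsCenteredGaussian

variable {n Ω : Type*} [Fintype n] [MeasurableSpace Ω] {P : Measure Ω} {U : Ω → n → ℝ}
  {S : Matrix n n ℝ}

lemma aemeasurable_dotProduct (hU : IsCenteredGaussian P U S) (a : n → ℝ) :
    AEMeasurable (fun ω => U ω ⬝ᵥ a) P :=
  aemeasurable_of_map_neZero (by rw [hU a]; infer_instance)

lemma integral_exp_dotProduct (hU : IsCenteredGaussian P U S) (hS : S.PosSemidef) (a : n → ℝ) :
    ∫ ω, exp (U ω ⬝ᵥ a) ∂P = exp ((a ⬝ᵥ S *ᵥ a) / 2) := by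
  have hq : 0 ≤ a ⬝ᵥ S *ᵥ a := by simpa using hS.dotProduct_mulVec_nonneg a
  simpa [mgf, hq] using mgf_gaussianReal (hU a) 1

lemma integrable_exp_dotProduct [NeZero P] (hU : IsCenteredGaussian P U S) (a : n → ℝ) :
    Integrable (fun ω => exp (U ω ⬝ᵥ a)) P := by
  have hpos : 0 < mgf (fun ω => U ω ⬝ᵥ a) P 1 := by
    rw [mgf_gaussianReal (hU a)]
    exact exp_pos _
  simpa using mgf_pos_iff.mp hpos

lemma integrable_exp_dotProduct_add_mul [NeZero P] (hU : IsCenteredGaussian P U S)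
    (θ v : n → ℝ) (s : ℝ) :
    Integrable (fun ω => exp (U ω ⬝ᵥ θ + s * U ω ⬝ᵥ v)) P := by
  simpa [dotProduct_add, dotProduct_smul] using hU.integrable_exp_dotProduct (θ + s • v)

lemma hasDerivAt_integral_exp_dotProduct_add_mul (hU : IsCenteredGaussian P U S)
    (hS : S.PosSemidef) (θ v : n → ℝ) :
    HasDerivAt (fun s => ∫ ω, exp (U ω ⬝ᵥ θ + s * U ω ⬝ᵥ v) ∂P)
      ((v ⬝ᵥ S *ᵥ θ) * exp ((θ ⬝ᵥ S *ᵥ θ) / 2)) 0 := by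
  have hS' : S.IsSymm := by simpa using hS.isHermitian
  have hquad : HasDerivAt (fun s : ℝ => (θ ⬝ᵥ S *ᵥ θ + 2 * s * (v ⬝ᵥ S *ᵥ θ)
      + s ^ 2 * (v ⬝ᵥ S *ᵥ v)) / 2) (v ⬝ᵥ S *ᵥ θ) 0 := by
    simpa using ((((hasDerivAt_id (0 : ℝ)).const_mul 2).mul_const (v ⬝ᵥ S *ᵥ θ)).const_add
      (θ ⬝ᵥ S *ᵥ θ) |>.add ((hasDerivAt_pow 2 (0 : ℝ)).mul_const (v ⬝ᵥ S *ᵥ v))).div_const 2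
  convert hquad.exp using 1
  · ext s
    rw [← hS'.dotProduct_mulVec_add_smul, ← hU.integral_exp_dotProduct hS]
    simp [dotProduct_add, dotProduct_smul]
  · simp [mul_comm]

lemma integral_dotProduct_mul_exp_dotProduct [NeZero P] (hU : IsCenteredGaussian P U S)
    (hS : S.PosSemidef) (θ v : n → ℝ) :
    ∫ ω, U ω ⬝ᵥ v * exp (U ω ⬝ᵥ θ) ∂P = (v ⬝ᵥ S *ᵥ θ) * exp ((θ ⬝ᵥ S *ᵥ θ) / 2) :=
  (hasDerivAt_integral_exp_add_mul (hU.aemeasurable_dotProduct θ)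
    (by simp [hU.integrable_exp_dotProduct_add_mul θ v])).unique
    (hU.hasDerivAt_integral_exp_dotProduct_add_mul hS θ v)

lemma integrable_dotProduct_mul_exp_dotProduct [NeZero P] (hU : IsCenteredGaussian P U S)
    (θ v : n → ℝ) :
    Integrable (fun ω => U ω ⬝ᵥ v * exp (U ω ⬝ᵥ θ)) P :=
  integrable_mul_exp_of_zero_mem_interior (hU.aemeasurable_dotProduct θ)
    (by simp [hU.integrable_exp_dotProduct_add_mul θ v])

variable {β : Type*} [MeasurableSpace β] {W : Ω → β} {φ : β → ℝ} {ξ : β → n → ℝ}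

lemma integral_comp_mul_exp_dotProduct (hU : IsCenteredGaussian P U S) (hS : S.PosSemidef)
    (hUm : Measurable U) (hW : Measurable W) (hWU : IndepFun W U P) (hφ : Measurable φ)
    (θ : n → ℝ) :
    ∫ ω, φ (W ω) * exp (U ω ⬝ᵥ θ) ∂P = exp ((θ ⬝ᵥ S *ᵥ θ) / 2) * ∫ ω, φ (W ω) ∂P := by
  rw [hWU.integral_fun_comp_mul_comp hW.aemeasurable hUm.aemeasurable hφ.aestronglyMeasurable
    (by fun_prop : Measurable fun u : n → ℝ => exp (u ⬝ᵥ θ)).aestronglyMeasurable,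
    hU.integral_exp_dotProduct hS, mul_comm]

lemma integral_comp_mul_dotProduct_mul_exp [NeZero P] (hU : IsCenteredGaussian P U S)
    (hS : S.PosSemidef) (hUm : Measurable U) (hW : Measurable W) (hWU : IndepFun W U P)
    (hφ : Measurable φ) (θ v : n → ℝ) :
    ∫ ω, φ (W ω) * (U ω ⬝ᵥ v * exp (U ω ⬝ᵥ θ)) ∂P
      = exp ((θ ⬝ᵥ S *ᵥ θ) / 2) * ((v ⬝ᵥ S *ᵥ θ) * ∫ ω, φ (W ω) ∂P) := by
  rw [hWU.integral_fun_comp_mul_comp hW.aemeasurable hUm.aemeasurable hφ.aestronglyMeasurable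
    (by fun_prop : Measurable fun u : n → ℝ => u ⬝ᵥ v * exp (u ⬝ᵥ θ)).aestronglyMeasurable,
    hU.integral_dotProduct_mul_exp_dotProduct hS]
  ring

lemma integrable_comp_of_integrable_mul_exp [NeZero P] (hU : IsCenteredGaussian P U S)
    (hW : Measurable W) (hWU : IndepFun W U P) (hφ : Measurable φ) {θ : n → ℝ}
    (hint : Integrable (fun ω => φ (W ω) * exp (U ω ⬝ᵥ θ)) P) :
    Integrable (fun ω => φ (W ω)) P :=
  (hWU.comp (φ := φ) (ψ := fun u => u ⬝ᵥ θ) hφ (by fun_prop)).integrable_left_of_integrable_mul_exp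
    (hφ.comp hW).aestronglyMeasurable (hU.aemeasurable_dotProduct θ) hint

lemma integrable_comp_mul_dotProduct_mul_exp [NeZero P] (hU : IsCenteredGaussian P U S)
    (hWU : IndepFun W U P) (hφ : Measurable φ) (hφW : Integrable (fun ω => φ (W ω)) P)
    (θ v : n → ℝ) :
    Integrable (fun ω => φ (W ω) * (U ω ⬝ᵥ v * exp (U ω ⬝ᵥ θ))) P :=
  (hWU.comp hφ (by fun_prop : Measurable fun u : n → ℝ => u ⬝ᵥ v * exp (u ⬝ᵥ θ))).integrable_mul
    hφW (hU.integrable_dotProduct_mul_exp_dotProduct θ v)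

lemma integrable_comp_mul_exp_dotProduct_of_integrable_add [NeZero P]
    (hU : IsCenteredGaussian P U S) (hW : Measurable W) (hWU : IndepFun W U P)
    (hφ : Measurable φ) (hξ : Measurable ξ) {θ : n → ℝ}
    (hint : Integrable (fun ω => φ (W ω) * exp ((ξ (W ω) + U ω) ⬝ᵥ θ)) P) :
    Integrable (fun ω => φ (W ω) * exp (ξ (W ω) ⬝ᵥ θ)) P :=
  hU.integrable_comp_of_integrable_mul_exp (φ := fun b => φ b * exp (ξ b ⬝ᵥ θ)) hW hWU
    (by fun_prop) (hint.congr (ae_of_all _ fun ω => by simp only [add_dotProduct, exp_add]; ring))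

lemma integral_comp_mul_exp_dotProduct_add (hU : IsCenteredGaussian P U S) (hS : S.PosSemidef)
    (hUm : Measurable U) (hW : Measurable W) (hWU : IndepFun W U P) (hφ : Measurable φ)
    (hξ : Measurable ξ) (θ : n → ℝ) :
    ∫ ω, φ (W ω) * exp ((ξ (W ω) + U ω) ⬝ᵥ θ) ∂P
      = exp ((θ ⬝ᵥ S *ᵥ θ) / 2) * ∫ ω, φ (W ω) * exp (ξ (W ω) ⬝ᵥ θ) ∂P := by
  rw [← hU.integral_comp_mul_exp_dotProduct (φ := fun b => φ b * exp (ξ b ⬝ᵥ θ)) hS hUm hW hWU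
    (by fun_prop)]
  exact integral_congr_ae (ae_of_all _ fun ω => by simp only [add_dotProduct, exp_add]; ring)

lemma integrable_comp_mul_apply_mul_exp_mul_exp [NeZero P] [DecidableEq n]
    (hU : IsCenteredGaussian P U S) (hW : Measurable W) (hWU : IndepFun W U P)
    (hφ : Measurable φ) (hξ : Measurable ξ) {θ : n → ℝ} {j : n}
    (hint : Integrable (fun ω => φ (W ω) * exp ((ξ (W ω) + U ω) ⬝ᵥ θ)) P)
    (hintj : Integrable (fun ω => φ (W ω) * (ξ (W ω) + U ω) j * exp ((ξ (W ω) + U ω) ⬝ᵥ θ)) P) :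
    Integrable (fun ω => φ (W ω) * ξ (W ω) j * exp (ξ (W ω) ⬝ᵥ θ) * exp (U ω ⬝ᵥ θ)) P :=
  (hintj.sub (hU.integrable_comp_mul_dotProduct_mul_exp (φ := fun b => φ b * exp (ξ b ⬝ᵥ θ)) hWU
    (by fun_prop) (hU.integrable_comp_mul_exp_dotProduct_of_integrable_add hW hWU hφ hξ hint) θ
    (Pi.single j 1))).congr (ae_of_all _ fun ω => by
      simp only [Pi.sub_apply, mul_add_apply_mul_exp_dotProduct]; ring)

lemma integrable_comp_mul_add_apply_mul_exp [NeZero P] [DecidableEq n]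
    (hU : IsCenteredGaussian P U S) (hW : Measurable W) (hWU : IndepFun W U P)
    (hφ : Measurable φ) (hξ : Measurable ξ) {θ : n → ℝ} {j : n}
    (hint : Integrable (fun ω => φ (W ω) * exp ((ξ (W ω) + U ω) ⬝ᵥ θ)) P)
    (hintj : Integrable (fun ω => φ (W ω) * (ξ (W ω) + U ω) j * exp ((ξ (W ω) + U ω) ⬝ᵥ θ)) P)
    (c : ℝ) :
    Integrable (fun ω => φ (W ω) * ((ξ (W ω) j + c) * exp (ξ (W ω) ⬝ᵥ θ))) P := by
  have hφξ := hU.integrable_comp_of_integrable_mul_exp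
    (φ := fun b => φ b * ξ b j * exp (ξ b ⬝ᵥ θ)) hW hWU (by fun_prop)
    (hU.integrable_comp_mul_apply_mul_exp_mul_exp hW hWU hφ hξ hint hintj)
  exact (hφξ.add ((hU.integrable_comp_mul_exp_dotProduct_of_integrable_add hW hWU hφ hξ
    hint).const_mul c)).congr (ae_of_all _ fun ω => by simp only [Pi.add_apply]; ring)

lemma integral_comp_mul_add_apply_mul_exp [NeZero P] [DecidableEq n]
    (hU : IsCenteredGaussian P U S) (hS : S.PosSemidef) (hUm : Measurable U) (hW : Measurable W)
    (hWU : IndepFun W U P) (hφ : Measurable φ) (hξ : Measurable ξ) {θ : n → ℝ} {j : n}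
    (hint : Integrable (fun ω => φ (W ω) * exp ((ξ (W ω) + U ω) ⬝ᵥ θ)) P)
    (hintj : Integrable (fun ω => φ (W ω) * (ξ (W ω) + U ω) j * exp ((ξ (W ω) + U ω) ⬝ᵥ θ)) P) :
    ∫ ω, φ (W ω) * (ξ (W ω) + U ω) j * exp ((ξ (W ω) + U ω) ⬝ᵥ θ) ∂P
      = exp ((θ ⬝ᵥ S *ᵥ θ) / 2)
        * ∫ ω, φ (W ω) * ((ξ (W ω) j + (S *ᵥ θ) j) * exp (ξ (W ω) ⬝ᵥ θ)) ∂P := by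
  have hφe := hU.integrable_comp_mul_exp_dotProduct_of_integrable_add hW hWU hφ hξ hint
  have hφξe := hU.integrable_comp_of_integrable_mul_exp
    (φ := fun b => φ b * ξ b j * exp (ξ b ⬝ᵥ θ)) hW hWU (by fun_prop)
    (hU.integrable_comp_mul_apply_mul_exp_mul_exp hW hWU hφ hξ hint hintj)
  simp only [mul_add_apply_mul_exp_dotProduct]
  rw [integral_add (hU.integrable_comp_mul_apply_mul_exp_mul_exp hW hWU hφ hξ hint hintj)
      (hU.integrable_comp_mul_dotProduct_mul_exp (φ := fun b => φ b * exp (ξ b ⬝ᵥ θ)) hWU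
        (by fun_prop) hφe θ (Pi.single j 1)),
    hU.integral_comp_mul_exp_dotProduct (φ := fun b => φ b * ξ b j * exp (ξ b ⬝ᵥ θ)) hS hUm hW
      hWU (by fun_prop),
    hU.integral_comp_mul_dotProduct_mul_exp (φ := fun b => φ b * exp (ξ b ⬝ᵥ θ)) hS hUm hW hWU
      (by fun_prop), single_one_dotProduct, ← mul_add, ← integral_const_mul,
    ← integral_add hφξe (hφe.const_mul _)]
  congr 1
  exact integral_congr_ae (ae_of_all _ fun ω => by ring)

end IsCenteredGaussian

/-- Exponential regression measurement error model: if `Y = exp(Xᵀθ₀) + ε` with `ε`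
independent of `X` and `E ε = 0`, and `Z = X + U` with `U ~ N(0, Σ_u)` (Cramér–Wold
characterization) independent of `(X, ε)`, then, assuming all the expectations involved
are finite,
`E[Y Z exp(Zᵀθ)] = exp(θᵀΣ_uθ/2) E[(X + Σ_uθ) exp((θ+θ₀)ᵀX)]` (componentwise) and
`E[Y exp(Zᵀθ)] = exp(θᵀΣ_uθ/2) E[exp((θ+θ₀)ᵀX)]`. -/
theorem exp_regression_moment_identities {p : ℕ} {Ω : Type*} [MeasurableSpace Ω]
    (P : Measure Ω) [IsProbabilityMeasure P]
    (X U : Ω → Fin p → ℝ) (ε : Ω → ℝ)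
    (hX : Measurable X) (hU : Measurable U) (hε : Measurable ε)
    (Su : Matrix (Fin p) (Fin p) ℝ) (hSu : Su.PosSemidef)
    (hUgauss : ∀ a : Fin p → ℝ,
      Measure.map (fun ω => (U ω) ⬝ᵥ a) P
        = gaussianReal 0 (Real.toNNReal (a ⬝ᵥ Su *ᵥ a)))
    (hUindep : IndepFun U (fun ω => (X ω, ε ω)) P)
    (hεindep : IndepFun ε X P)
    (hεmean : ∫ ω, ε ω ∂P = 0)
    (θ θ0 : Fin p → ℝ)
    (Y : Ω → ℝ) (hY : ∀ ω, Y ω = Real.exp ((X ω) ⬝ᵥ θ0) + ε ω)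
    (Z : Ω → Fin p → ℝ) (hZ : ∀ ω, Z ω = X ω + U ω)
    (hint1 : ∀ j, Integrable (fun ω => Y ω * Z ω j * Real.exp ((Z ω) ⬝ᵥ θ)) P)
    (hint2 : Integrable (fun ω => Y ω * Real.exp ((Z ω) ⬝ᵥ θ)) P)
    (hint3 : ∀ j, Integrable
      (fun ω => (X ω j + (Su *ᵥ θ) j) * Real.exp ((X ω) ⬝ᵥ (θ + θ0))) P)
    (hint4 : Integrable (fun ω => Real.exp ((X ω) ⬝ᵥ (θ + θ0))) P) :
    (∀ j, ∫ ω, Y ω * Z ω j * Real.exp ((Z ω) ⬝ᵥ θ) ∂P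
        = Real.exp ((θ ⬝ᵥ Su *ᵥ θ) / 2)
          * ∫ ω, (X ω j + (Su *ᵥ θ) j) * Real.exp ((X ω) ⬝ᵥ (θ + θ0)) ∂P) ∧
    (∫ ω, Y ω * Real.exp ((Z ω) ⬝ᵥ θ) ∂P
        = Real.exp ((θ ⬝ᵥ Su *ᵥ θ) / 2) * ∫ ω, Real.exp ((X ω) ⬝ᵥ (θ + θ0)) ∂P) := by
  obtain rfl : Y = fun ω => exp (X ω ⬝ᵥ θ0) + ε ω := funext hY
  obtain rfl : Z = fun ω => X ω + U ω := funext hZ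
  have hG : IsCenteredGaussian P U Su := hUgauss
  have hW : Measurable fun ω => (X ω, ε ω) := hX.prodMk hε
  have hφ : Measurable fun w : (Fin p → ℝ) × ℝ => exp (w.1 ⬝ᵥ θ0) + w.2 := by fun_prop
  have hexp (x : Fin p → ℝ) : exp (x ⬝ᵥ θ0) * exp (x ⬝ᵥ θ) = exp (x ⬝ᵥ (θ + θ0)) := by
    rw [dotProduct_add, exp_add, mul_comm]
  have hnoise {h : (Fin p → ℝ) → ℝ} (hh : Measurable h) :=
    hεindep.integral_add_mul_comp_of_integral_eq_zero hε.aestronglyMeasurable hX hεmean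
      (f := fun x => exp (x ⬝ᵥ θ0)) hh
  refine ⟨fun j => ?_, ?_⟩
  · calc _ = exp ((θ ⬝ᵥ Su *ᵥ θ) / 2) * ∫ ω, (exp (X ω ⬝ᵥ θ0) + ε ω)
          * ((X ω j + (Su *ᵥ θ) j) * exp (X ω ⬝ᵥ θ)) ∂P :=
        hG.integral_comp_mul_add_apply_mul_exp hSu hU hW hUindep.symm hφ measurable_fst hint2
          (hint1 j)
      _ = exp ((θ ⬝ᵥ Su *ᵥ θ) / 2) * ∫ ω, exp (X ω ⬝ᵥ θ0)
          * ((X ω j + (Su *ᵥ θ) j) * exp (X ω ⬝ᵥ θ)) ∂P :=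
        congrArg _ (hnoise (h := fun x => (x j + (Su *ᵥ θ) j) * exp (x ⬝ᵥ θ)) (by fun_prop)
          ((hint3 j).congr (ae_of_all _ fun ω => by simp only [← hexp]; ring))
          (hG.integrable_comp_mul_add_apply_mul_exp hW hUindep.symm hφ measurable_fst hint2
            (hint1 j) _))
      _ = _ := by simp only [mul_left_comm _ (_ + _), hexp]
  · calc _ = exp ((θ ⬝ᵥ Su *ᵥ θ) / 2) * ∫ ω, (exp (X ω ⬝ᵥ θ0) + ε ω) * exp (X ω ⬝ᵥ θ) ∂P :=
        hG.integral_comp_mul_exp_dotProduct_add hSu hU hW hUindep.symm hφ measurable_fst θ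
      _ = exp ((θ ⬝ᵥ Su *ᵥ θ) / 2) * ∫ ω, exp (X ω ⬝ᵥ θ0) * exp (X ω ⬝ᵥ θ) ∂P :=
        congrArg _ (hnoise (h := fun x => exp (x ⬝ᵥ θ)) (by fun_prop)
          (by simpa only [hexp] using hint4)
          (hG.integrable_comp_mul_exp_dotProduct_of_integrable_add hW hUindep.symm hφ
            measurable_fst hint2))
      _ = _ := by simp only [hexp]
end

section
/- Poisson regression conditional expectation: let V ~ N(0, Σ_u) be independent of (Y, Z) where Y ∈ ℤ≥0 and Z ∈ ℝᵖ, and set Z(λ) = Z + √λ V for λ ≥ 0. Then E[Y Z(λ)ᵀθ − exp(Z(λ)ᵀθ) | (Y, Z)] = Y Zᵀθ − exp(Zᵀθ) exp(λ θᵀΣ_uθ / 2). -/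
open MeasureTheory ProbabilityTheory Matrix Real

open NNReal

/-! Only the law of `Vᵀθ` enters, and by the Cramér–Wold hypothesis it is `N(0, θᵀΣ_uθ)`. The
integrand is then `c (a + s x) − exp (a + s x)` in `x = Vᵀθ`: its linear part averages to
`c a` and its exponential part is `exp a` times the Gaussian moment generating function at `s`. -/

lemma integral_exp_affine_gaussianReal (μ : ℝ) (v : ℝ≥0) (a s : ℝ) :
    ∫ x, exp (a + s * x) ∂gaussianReal μ v = exp (a + s * μ + v * s ^ 2 / 2) := by
  simp_rw [exp_add a]
  rw [integral_const_mul, ← mgf, mgf_gaussianReal (μ := μ) (v := v) (by simp), ← exp_add]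
  ring_nf

lemma integral_affine_sub_exp_gaussianReal (μ : ℝ) (v : ℝ≥0) (c a s : ℝ) :
    ∫ x, (c * (a + s * x) - exp (a + s * x)) ∂gaussianReal μ v
      = c * (a + s * μ) - exp (a + s * μ + v * s ^ 2 / 2) := by
  have hid : Integrable (fun x ↦ x) (gaussianReal μ v) :=
    (memLp_id_gaussianReal 1).integrable (by simp)
  have hlin : Integrable (fun x ↦ c * (a + s * x)) (gaussianReal μ v) :=
    ((integrable_const a).add (hid.const_mul s)).const_mul c
  have hexp : Integrable (fun x ↦ exp (a + s * x)) (gaussianReal μ v) := by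
    simp_rw [exp_add a]
    exact (integrable_exp_mul_gaussianReal s).const_mul _
  rw [integral_sub hlin hexp, integral_exp_affine_gaussianReal, integral_const_mul,
    integral_add (integrable_const a) (hid.const_mul s),
    integral_const_mul, integral_id_gaussianReal]
  simp

theorem poisson_simex_conditional_expectation_general {p : ℕ} {Ω : Type*} [MeasurableSpace Ω]
    (P : Measure Ω)
    (V : Ω → Fin p → ℝ)
    (Su : Matrix (Fin p) (Fin p) ℝ) (hSu : Su.PosSemidef)
    (hgauss : ∀ a : Fin p → ℝ,
      Measure.map (fun ω => (V ω) ⬝ᵥ a) P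
        = gaussianReal 0 (Real.toNNReal (a ⬝ᵥ Su *ᵥ a)))
    (l : ℝ) (hl : 0 ≤ l) (y : ℕ) (z θ : Fin p → ℝ) :
    ∫ ω, ((y : ℝ) * ((z + Real.sqrt l • V ω) ⬝ᵥ θ)
            - Real.exp ((z + Real.sqrt l • V ω) ⬝ᵥ θ)) ∂P
      = (y : ℝ) * (z ⬝ᵥ θ)
        - Real.exp (z ⬝ᵥ θ) * Real.exp (l * (θ ⬝ᵥ Su *ᵥ θ) / 2) := by
  have hX : AEMeasurable (fun ω ↦ V ω ⬝ᵥ θ) P :=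
    .of_map_ne_zero (by rw [hgauss θ]; exact IsProbabilityMeasure.ne_zero _)
  simp only [add_dotProduct, smul_dotProduct, smul_eq_mul]
  rw [← integral_map (f := fun x ↦ (y : ℝ) * (z ⬝ᵥ θ + √l * x) - exp (z ⬝ᵥ θ + √l * x)) hX
    (by fun_prop), hgauss θ, integral_affine_sub_exp_gaussianReal,
    coe_toNNReal _ (by simpa using hSu.dotProduct_mulVec_nonneg θ), sq_sqrt hl, mul_zero,
    add_zero, exp_add]
  ring_nf

/-- Poisson regression conditional expectation: for `V ~ N(0, Σ_u)` (Cramér–Wold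
characterization) independent of `(Y, Z)`, with `Z(λ) = Z + √λ V` and `λ ≥ 0`, the
conditional expectation given `(Y, Z) = (y, z)` satisfies
`E[Y Z(λ)ᵀθ − exp(Z(λ)ᵀθ) | (Y, Z)] = Y Zᵀθ − exp(Zᵀθ) exp(λ θᵀΣ_uθ / 2)`. -/
theorem poisson_simex_conditional_expectation {p : ℕ} {Ω : Type*} [MeasurableSpace Ω]
    (P : Measure Ω) [IsProbabilityMeasure P]
    (V : Ω → Fin p → ℝ) (hV : Measurable V)
    (Su : Matrix (Fin p) (Fin p) ℝ) (hSu : Su.PosSemidef)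
    (hgauss : ∀ a : Fin p → ℝ,
      Measure.map (fun ω => (V ω) ⬝ᵥ a) P
        = gaussianReal 0 (Real.toNNReal (a ⬝ᵥ Su *ᵥ a)))
    (l : ℝ) (hl : 0 ≤ l) (y : ℕ) (z θ : Fin p → ℝ) :
    ∫ ω, ((y : ℝ) * ((z + Real.sqrt l • V ω) ⬝ᵥ θ)
            - Real.exp ((z + Real.sqrt l • V ω) ⬝ᵥ θ)) ∂P
      = (y : ℝ) * (z ⬝ᵥ θ)
        - Real.exp (z ⬝ᵥ θ) * Real.exp (l * (θ ⬝ᵥ Su *ᵥ θ) / 2) :=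
  poisson_simex_conditional_expectation_general P V Su hSu hgauss l hl y z θ
end
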